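/- If f_1 and f_2 are restricted rotations of the same type (a,b) on I = [p,q), then f_1^{-1} f_2 is a finite product of interval swap maps. -/

import Mathlib

open scoped TensorProduct

/-- An interval exchange transformation of the half-open interval `[p, q)`:
a bijection of `[p, q)` onto itself, extended by the identity outside,
which is a translation on each piece of a finite partition of `[p, q)`
into half-open intervals. -/
def IsIET (p q : ℝ) (f : ℝ → ℝ) : Prop :=
  Set.BijOn f (Set.Ico p q) (Set.Ico p q) ∧
  (∀ x, x ∉ Set.Ico p q → f x = x) ∧
  ∃ (n : ℕ) (pt : Fin (n + 1) → ℝ),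
    StrictMono pt ∧ pt 0 = p ∧ pt (Fin.last n) = q ∧
    ∀ i : Fin n, ∃ t : ℝ,
      ∀ x ∈ Set.Ico (pt i.castSucc) (pt i.succ), f x = x + t

/-- A restricted rotation of type `(a, b)` on `[p, q)`: it exchanges two
adjacent half-open intervals of lengths `a` (on the left) and `b` (on the
right) by translation, fixing the rest of the line. -/
def IsRestrictedRotation (p q a b : ℝ) (f : ℝ → ℝ) : Prop :=
  0 < a ∧ 0 < b ∧ ∃ x : ℝ, p ≤ x ∧ x + a + b ≤ q ∧
    (∀ y ∈ Set.Ico x (x + a), f y = y + b) ∧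
    (∀ y ∈ Set.Ico (x + a) (x + a + b), f y = y - a) ∧
    (∀ y, y ∉ Set.Ico x (x + a + b) → f y = y)

/-- An interval swap map of type `a` on `[p, q)`: it interchanges two
disjoint half-open intervals of length `a` by translation, fixing the
rest of the line. -/
def IsIntervalSwap (p q a : ℝ) (f : ℝ → ℝ) : Prop :=
  0 < a ∧ ∃ x y : ℝ, p ≤ x ∧ x + a ≤ y ∧ y + a ≤ q ∧
    (∀ z ∈ Set.Ico x (x + a), f z = z + (y - x)) ∧
    (∀ z ∈ Set.Ico y (y + a), f z = z - (y - x)) ∧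
    (∀ z, z ∉ Set.Ico x (x + a) ∪ Set.Ico y (y + a) → f z = z)

/-- `f` is a finite product (composition) of interval swap maps on `[p, q)`. -/
def IsSwapProduct (p q : ℝ) (f : ℝ → ℝ) : Prop :=
  ∃ L : List (ℝ → ℝ), (∀ g ∈ L, ∃ a, IsIntervalSwap p q a g) ∧
    f = L.foldr (· ∘ ·) id

/-- `ξ ∈ ℝ ⊗[ℚ] ℝ` is the SAF sum of `f` computed from some partition of
`[p, q)` into half-open intervals on each of which `f` is a translation. -/
def HasSAF (p q : ℝ) (f : ℝ → ℝ) (ξ : ℝ ⊗[ℚ] ℝ) : Prop :=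
  ∃ (n : ℕ) (pt : Fin (n + 1) → ℝ) (t : Fin n → ℝ),
    StrictMono pt ∧ pt 0 = p ∧ pt (Fin.last n) = q ∧
    (∀ i : Fin n, ∀ x ∈ Set.Ico (pt i.castSucc) (pt i.succ), f x = x + t i) ∧
    ξ = ∑ i : Fin n, (pt i.succ - pt i.castSucc) ⊗ₜ[ℚ] t i

/-! Write `R_x` for the restricted rotation of type `(a, b)` supported on `[x, x + a + b)`.
For `0 ≤ d ≤ a`, sliding the support by `d` costs two interval swaps of length `d`:
`R_{x+d} = R_x ∘ σ(x, x + a + b) ∘ σ(x, x + a)`. As interval swaps are involutions, "differing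
by a product of interval swaps" is an equivalence relation, and any two admissible base points
are joined by finitely many slides of length at most `a`. -/

open Function

noncomputable def intervalSwap (x y l z : ℝ) : ℝ :=
  if x ≤ z ∧ z < x + l then z + (y - x)
  else if y ≤ z ∧ z < y + l then z - (y - x) else z

noncomputable def restrictedRotation (x a b z : ℝ) : ℝ :=
  if x ≤ z ∧ z < x + a then z + b
  else if x + a ≤ z ∧ z < x + a + b then z - a else z

set_option maxHeartbeats 1600000 in
theorem restrictedRotation_comp_intervalSwap_comp_intervalSwap {x a b d : ℝ} (hb : 0 ≤ b)
    (hd : 0 ≤ d) (hda : d ≤ a) :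
    restrictedRotation x a b ∘ intervalSwap x (x + a + b) d ∘ intervalSwap x (x + a) d =
      restrictedRotation (x + d) a b := by
  funext z
  simp only [comp_apply, restrictedRotation, intervalSwap]
  split_ifs <;>
    first
      | linarith
      | (simp only [not_and_or, not_le, not_lt] at *; casesm* _ ∨ _ <;> linarith)

theorem isIntervalSwap_intervalSwap {p q x y l : ℝ} (hl : 0 < l) (hx : p ≤ x) (hxy : x + l ≤ y)
    (hyq : y + l ≤ q) : IsIntervalSwap p q l (intervalSwap x y l) := by
  refine ⟨hl, x, y, hx, hxy, hyq, fun z hz => if_pos hz, fun z hz => ?_, fun z hz => ?_⟩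
  · have hzx : ¬(x ≤ z ∧ z < x + l) := fun h => by linarith [hz.1, h.2]
    rw [intervalSwap, if_neg hzx]
    exact if_pos hz
  · simp only [Set.mem_union, Set.mem_Ico, not_or] at hz
    rw [intervalSwap, if_neg hz.1, if_neg hz.2]

theorem IsRestrictedRotation.exists_eq_restrictedRotation {p q a b : ℝ} {f : ℝ → ℝ}
    (h : IsRestrictedRotation p q a b f) :
    ∃ x, p ≤ x ∧ x + a + b ≤ q ∧ f = restrictedRotation x a b := by
  obtain ⟨-, -, x, hx, hxq, hleft, hright, hout⟩ := h
  refine ⟨x, hx, hxq, funext fun z => ?_⟩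
  rw [restrictedRotation]
  split_ifs with h₁ h₂
  · exact hleft z h₁
  · exact hright z h₂
  · refine hout z fun hz => ?_
    simp only [Set.mem_Ico, not_and, not_lt] at hz h₁ h₂
    linarith [h₂ (h₁ hz.1), hz.2]

theorem IsIntervalSwap.involutive {p q l : ℝ} {g : ℝ → ℝ} (h : IsIntervalSwap p q l g) :
    Involutive g := by
  obtain ⟨-, x, y, -, hxy, -, hleft, hright, hout⟩ := h
  intro z
  by_cases h₁ : z ∈ Set.Ico x (x + l)
  · rw [hleft z h₁, hright, add_sub_cancel_right]
    simp only [Set.mem_Ico] at h₁ ⊢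
    constructor <;> linarith
  by_cases h₂ : z ∈ Set.Ico y (y + l)
  · rw [hright z h₂, hleft, sub_add_cancel]
    simp only [Set.mem_Ico] at h₂ ⊢
    constructor <;> linarith
  have hz : z ∉ Set.Ico x (x + l) ∪ Set.Ico y (y + l) := by simp [h₁, h₂]
  rw [hout z hz, hout z hz]

theorem foldr_comp_append (L₁ L₂ : List (ℝ → ℝ)) :
    (L₁ ++ L₂).foldr (· ∘ ·) id = L₁.foldr (· ∘ ·) id ∘ L₂.foldr (· ∘ ·) id := by
  induction L₁ with
  | nil => rfl
  | cons g L ih => simp only [List.cons_append, List.foldr_cons, ih, comp_assoc]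

namespace IsSwapProduct

variable {p q : ℝ}

theorem id : IsSwapProduct p q id := ⟨[], by simp, rfl⟩

theorem of_isIntervalSwap {l : ℝ} {g : ℝ → ℝ} (h : IsIntervalSwap p q l g) :
    IsSwapProduct p q g :=
  ⟨[g], by simpa using ⟨l, h⟩, rfl⟩

theorem comp {g₁ g₂ : ℝ → ℝ} (h₁ : IsSwapProduct p q g₁) (h₂ : IsSwapProduct p q g₂) :
    IsSwapProduct p q (g₁ ∘ g₂) := by
  obtain ⟨L₁, hL₁, rfl⟩ := h₁
  obtain ⟨L₂, hL₂, rfl⟩ := h₂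
  refine ⟨L₁ ++ L₂, fun g hg => ?_, (foldr_comp_append L₁ L₂).symm⟩
  rcases List.mem_append.1 hg with hg | hg
  exacts [hL₁ g hg, hL₂ g hg]

theorem exists_rightInverse {g : ℝ → ℝ} (h : IsSwapProduct p q g) :
    ∃ g', IsSwapProduct p q g' ∧ g ∘ g' = _root_.id := by
  obtain ⟨L, hL, rfl⟩ := h
  induction L with
  | nil => exact ⟨_root_.id, id, rfl⟩
  | cons s L ih =>
    obtain ⟨g', hg', hinv⟩ := ih fun g hg => hL g (List.mem_cons_of_mem _ hg)
    obtain ⟨l, hs⟩ := hL s List.mem_cons_self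
    refine ⟨g' ∘ s, hg'.comp (of_isIntervalSwap hs), ?_⟩
    rw [List.foldr_cons, comp_assoc, ← comp_assoc _ g', hinv, id_comp,
      hs.involutive.comp_self]

end IsSwapProduct

def SwapRelated (p q : ℝ) (f₁ f₂ : ℝ → ℝ) : Prop :=
  ∃ g, IsSwapProduct p q g ∧ f₁ ∘ g = f₂

namespace SwapRelated

variable {p q : ℝ} {f₁ f₂ f₃ : ℝ → ℝ}

@[refl] theorem refl (f : ℝ → ℝ) : SwapRelated p q f f := ⟨_root_.id, IsSwapProduct.id, rfl⟩

theorem trans (h₁₂ : SwapRelated p q f₁ f₂) (h₂₃ : SwapRelated p q f₂ f₃) :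
    SwapRelated p q f₁ f₃ := by
  obtain ⟨g, hg, rfl⟩ := h₁₂
  obtain ⟨g', hg', rfl⟩ := h₂₃
  exact ⟨g ∘ g', hg.comp hg', rfl⟩

theorem symm (h : SwapRelated p q f₁ f₂) : SwapRelated p q f₂ f₁ := by
  obtain ⟨g, hg, rfl⟩ := h
  obtain ⟨g', hg', hinv⟩ := hg.exists_rightInverse
  exact ⟨g', hg', by rw [comp_assoc, hinv, comp_id]⟩

end SwapRelated

theorem exists_eq_nat_mul_of_nonneg {a t : ℝ} (ha : 0 < a) (ht : 0 ≤ t) :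
    ∃ (n : ℕ) (d : ℝ), 0 ≤ d ∧ d ≤ a ∧ t = n * d := by
  obtain ⟨n, hn⟩ := exists_nat_gt (t / a)
  have hn₀ : (0 : ℝ) < n := (div_nonneg ht ha.le).trans_lt hn
  refine ⟨n, t / n, div_nonneg ht hn₀.le, ?_, by field_simp⟩
  rw [div_lt_iff₀ ha] at hn
  rw [div_le_iff₀ hn₀]
  linarith

section RestrictedRotation

variable {p q a b x : ℝ}

theorem swapRelated_restrictedRotation_add (hb : 0 ≤ b) {d : ℝ} (hd : 0 ≤ d) (hda : d ≤ a)
    (hx : p ≤ x) (hq : x + d + a + b ≤ q) :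
    SwapRelated p q (restrictedRotation x a b) (restrictedRotation (x + d) a b) := by
  rcases hd.eq_or_lt with rfl | hd₀
  · rw [add_zero]
  refine ⟨_, ?_, restrictedRotation_comp_intervalSwap_comp_intervalSwap hb hd hda⟩
  exact (IsSwapProduct.of_isIntervalSwap (isIntervalSwap_intervalSwap hd₀ hx (by linarith)
    (by linarith))).comp (.of_isIntervalSwap (isIntervalSwap_intervalSwap hd₀ hx (by linarith)
    (by linarith)))

theorem swapRelated_restrictedRotation_add_nsmul (hb : 0 ≤ b) {d : ℝ} (hd : 0 ≤ d)
    (hda : d ≤ a) (hx : p ≤ x) (n : ℕ) (hq : x + n * d + a + b ≤ q) :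
    SwapRelated p q (restrictedRotation x a b) (restrictedRotation (x + n * d) a b) := by
  induction n with
  | zero => simp only [CharP.cast_eq_zero, zero_mul, add_zero]; rfl
  | succ n ih =>
    have hnd : 0 ≤ n * d := by positivity
    push_cast at hq ⊢
    refine (ih (by linarith)).trans ?_
    rw [add_one_mul, ← add_assoc]
    exact swapRelated_restrictedRotation_add hb hd hda (by linarith) (by linarith)

theorem swapRelated_restrictedRotation_of_le (ha : 0 < a) (hb : 0 ≤ b) {y : ℝ} (hxy : x ≤ y)
    (hx : p ≤ x) (hy : y + a + b ≤ q) :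
    SwapRelated p q (restrictedRotation x a b) (restrictedRotation y a b) := by
  obtain ⟨n, d, hd, hda, hnd⟩ := exists_eq_nat_mul_of_nonneg ha (sub_nonneg.2 hxy)
  obtain rfl : y = x + n * d := by rw [← hnd, add_sub_cancel]
  exact swapRelated_restrictedRotation_add_nsmul hb hd hda hx n hy

theorem swapRelated_restrictedRotation (ha : 0 < a) (hb : 0 ≤ b) {y : ℝ} (hx : p ≤ x)
    (hy : p ≤ y) (hxq : x + a + b ≤ q) (hyq : y + a + b ≤ q) :
    SwapRelated p q (restrictedRotation x a b) (restrictedRotation y a b) := by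
  rcases le_total x y with hxy | hyx
  · exact swapRelated_restrictedRotation_of_le ha hb hxy hx hyq
  · exact (swapRelated_restrictedRotation_of_le ha hb hyx hy hxq).symm

end RestrictedRotation

/-- If `f₁` and `f₂` are restricted rotations of the same type `(a, b)`, then
`f₁⁻¹ ∘ f₂` is a finite product of interval swap maps. -/
theorem rotations_same_type (p q a b : ℝ) (f₁ f₂ : ℝ → ℝ)
    (h₁ : IsRestrictedRotation p q a b f₁)
    (h₂ : IsRestrictedRotation p q a b f₂) :
    ∃ g : ℝ → ℝ, IsSwapProduct p q g ∧ f₁ ∘ g = f₂ := by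
  obtain ⟨x₁, hx₁, hx₁q, rfl⟩ := h₁.exists_eq_restrictedRotation
  obtain ⟨x₂, hx₂, hx₂q, rfl⟩ := h₂.exists_eq_restrictedRotation
  exact swapRelated_restrictedRotation h₁.1 h₁.2.1.le hx₁ hx₂ hx₁q hx₂q
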